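/- arXiv:2309.12476 — 3 statements merged into one kernel-verified Lean document; each statement's English description precedes it below -/
import Mathlib

section
/- Let R ∈ ℝᵈ be a vector, let p, q ∈ ℕ with p + q ≤ d, and let R̃ be obtained by adding independent N(0, σ²) noise to each entry of R. Let B^p be the event that the set of indices of the p largest entries of R̃ coincides with that of R, and B_q the event that the set of indices of the q smallest entries of R̃ coincides with that of R. Then P(B^p ∩ B_q) ≤ min{ Φ((min T^p(R) - max T^{-p}(R))/(√2 σ)), Q((max T_q(R) - min T_{-q}(R))/(√2 σ)) }, where T^p(R) is the multiset of the p largest entries, T^{-p}(R) the remaining entries, T_q(R) the q smallest entries, and T_{-q}(R) the remaining entries. -/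
open MeasureTheory ProbabilityTheory

/-- Standard Gaussian CDF. -/
noncomputable def Phi (y : ℝ) : ℝ := (gaussianReal 0 1 (Set.Iic y)).toReal

/-- Gaussian survival function `Q(y) = 1 - Φ(y)`. -/
noncomputable def Qsurv (y : ℝ) : ℝ := 1 - Phi y

section RewardDesignAux

open Real
open scoped ENNReal NNReal

lemma pdf_conv (v : ℝ≥0) (hv : v ≠ 0) (u : ℝ) :
    ∫ y, gaussianPDFReal 0 v (u + y) * gaussianPDFReal 0 v y = gaussianPDFReal 0 (2 * v) u := by
  have hv0 : (0:ℝ) < v := by exact_mod_cast pos_iff_ne_zero.mpr hv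
  have hπ := Real.pi_pos
  have h1 : ∀ y : ℝ, gaussianPDFReal 0 v (u + y) * gaussianPDFReal 0 v y
      = ((√(2*π*v))⁻¹ * (√(2*π*v))⁻¹ * rexp (-u^2/(4*v))) * rexp (-(y + u/2)^2 / v) := by
    intro y
    simp only [gaussianPDFReal, sub_zero]
    have hexp : -(u + y)^2/(2*(v:ℝ)) + -y^2/(2*(v:ℝ)) = -u^2/(4*(v:ℝ)) + -(y+u/2)^2/(v:ℝ) := by
      field_simp
      ring
    rw [mul_mul_mul_comm, ← Real.exp_add, hexp, Real.exp_add]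
    ring
  simp only [h1]
  rw [MeasureTheory.integral_const_mul]
  have h2 : ∫ y : ℝ, rexp (-(y + u/2)^2 / v) = ∫ y : ℝ, rexp (-y^2 / (v:ℝ)) :=
    integral_add_right_eq_self (fun y => rexp (-y^2 / (v:ℝ))) (u/2)
  rw [h2]
  have h3 : ∀ y : ℝ, -y^2/(v:ℝ) = -((v:ℝ)⁻¹) * y^2 := by intro y; field_simp
  simp only [h3]
  rw [integral_gaussian]
  have h4 : π / ((v:ℝ)⁻¹) = π * v := by field_simp
  rw [h4]
  simp only [gaussianPDFReal, sub_zero, NNReal.coe_mul, NNReal.coe_ofNat]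
  have h6 : √(2 * π * (2*(v:ℝ))) = 2 * √(π * v) := by
    rw [show (2:ℝ) * π * (2 * v) = 2^2 * (π * v) by ring, Real.sqrt_mul (by norm_num),
      Real.sqrt_sq (by norm_num)]
  rw [h6, ← mul_inv, Real.mul_self_sqrt (by positivity : (0:ℝ) ≤ 2*π*v)]
  have h8 : √(π*(v:ℝ)) * √(π*(v:ℝ)) = π*v := Real.mul_self_sqrt (by positivity)
  have h9 : -u^2/(2*(2*(v:ℝ))) = -u^2/(4*(v:ℝ)) := by ring_nf
  rw [h9]
  have hs2 : √(π*(v:ℝ)) ≠ 0 := by positivity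
  field_simp
  have hπ2 : √π^2 = π := Real.sq_sqrt (le_of_lt hπ)
  have hv2 : √(v:ℝ)^2 = (v:ℝ) := Real.sq_sqrt (le_of_lt hv0)
  have h82 : √(π*(v:ℝ))^2 = π*(v:ℝ) := Real.sq_sqrt (by positivity)
  have hππ : √π * √π = π := Real.mul_self_sqrt (le_of_lt hπ)
  have hvv : √(v:ℝ) * √(v:ℝ) = (v:ℝ) := Real.mul_self_sqrt (le_of_lt hv0)
  linear_combination h82

lemma gaussianPDF_conv (v : ℝ≥0) (hv : v ≠ 0) (u : ℝ) :
    ∫⁻ y, gaussianPDF 0 v (u + y) * gaussianPDF 0 v y = gaussianPDF 0 (2 * v) u := by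
  have hv0 : (0:ℝ) < v := by exact_mod_cast pos_iff_ne_zero.mpr hv
  have hmeas : AEStronglyMeasurable (fun y => gaussianPDFReal 0 v (u + y)) volume :=
    ((measurable_gaussianPDFReal 0 v).comp (measurable_const.add measurable_id)).aestronglyMeasurable
  have hbd : ∀ y : ℝ, ‖gaussianPDFReal 0 v (u + y)‖ ≤ (√(2*π*v))⁻¹ := by
    intro y
    rw [Real.norm_eq_abs, abs_of_nonneg (gaussianPDFReal_nonneg _ _ _)]
    unfold gaussianPDFReal
    have : rexp (-(u + y - 0)^2/(2*(v:ℝ))) ≤ 1 := by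
      rw [Real.exp_le_one_iff]
      have h1 : (0:ℝ) ≤ (u + y - 0)^2 := sq_nonneg _
      have h2 : (0:ℝ) < 2 * v := by positivity
      apply div_nonpos_of_nonpos_of_nonneg <;> linarith
    calc (√(2*π*(v:ℝ)))⁻¹ * rexp (-(u + y - 0)^2/(2*(v:ℝ)))
        ≤ (√(2*π*(v:ℝ)))⁻¹ * 1 := by
          apply mul_le_mul_of_nonneg_left this
          positivity
      _ = (√(2*π*(v:ℝ)))⁻¹ := mul_one _
  have hint : Integrable (fun y => gaussianPDFReal 0 v (u + y) * gaussianPDFReal 0 v y) :=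
    (integrable_gaussianPDFReal 0 v).bdd_mul hmeas (ae_of_all _ hbd)
  simp only [gaussianPDF]
  have hmul : ∀ y : ℝ, ENNReal.ofReal (gaussianPDFReal 0 v (u+y)) * ENNReal.ofReal (gaussianPDFReal 0 v y)
      = ENNReal.ofReal (gaussianPDFReal 0 v (u+y) * gaussianPDFReal 0 v y) :=
    fun y => (ENNReal.ofReal_mul (gaussianPDFReal_nonneg _ _ _)).symm
  simp only [hmul]
  rw [← ofReal_integral_eq_lintegral_ofReal hint
    (ae_of_all _ (fun y => mul_nonneg (gaussianPDFReal_nonneg _ _ _) (gaussianPDFReal_nonneg _ _ _)))]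
  rw [pdf_conv v hv u]

lemma gauss_prod_sub (v : ℝ≥0) (hv : v ≠ 0) (c : ℝ) :
    ((gaussianReal 0 v).prod (gaussianReal 0 v)) {p : ℝ × ℝ | p.1 - p.2 ≤ c}
      = gaussianReal 0 (2 * v) (Set.Iic c) := by
  have h2v : (2 : ℝ≥0) * v ≠ 0 := by simp [hv]
  have hs : MeasurableSet {p : ℝ × ℝ | p.1 - p.2 ≤ c} :=
    measurableSet_le (measurable_fst.sub measurable_snd) measurable_const
  rw [Measure.prod_apply_symm hs]
  have hpre : ∀ y : ℝ, (fun x => (x, y)) ⁻¹' {p : ℝ × ℝ | p.1 - p.2 ≤ c} = Set.Iic (c + y) := by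
    intro y; ext x; simp [sub_le_iff_le_add]
  simp only [hpre]
  have hsub : ∀ y : ℝ, gaussianReal 0 v (Set.Iic (c + y))
      = ∫⁻ u in Set.Iic c, gaussianPDF 0 v (u + y) := by
    intro y
    rw [gaussianReal_apply 0 hv, ← lintegral_indicator measurableSet_Iic,
      ← lintegral_indicator measurableSet_Iic,
      ← lintegral_add_right_eq_self (fun x => Set.indicator (Set.Iic (c+y)) (gaussianPDF 0 v) x) y]
    congr 1
    ext u
    by_cases h : u ≤ c
    · rw [Set.indicator_of_mem (by simpa using h), Set.indicator_of_mem
        (by simp only [Set.mem_Iic]; linarith)]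
    · rw [Set.indicator_of_notMem (by simpa using h), Set.indicator_of_notMem
        (by simp only [Set.mem_Iic]; intro hc; exact h (by linarith))]
  simp only [hsub]
  have hG : Measurable fun y : ℝ => ∫⁻ u in Set.Iic c, gaussianPDF 0 v (u + y) :=
    Measurable.lintegral_prod_right
      ((measurable_gaussianPDF 0 v).comp (measurable_snd.add measurable_fst))
  rw [gaussianReal_of_var_ne_zero 0 hv,
    lintegral_withDensity_eq_lintegral_mul volume (measurable_gaussianPDF 0 v) hG]
  have hswap1 : ∀ y : ℝ, gaussianPDF 0 v y * ∫⁻ u in Set.Iic c, gaussianPDF 0 v (u + y)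
      = ∫⁻ u in Set.Iic c, gaussianPDF 0 v (u + y) * gaussianPDF 0 v y := by
    intro y
    rw [← lintegral_const_mul (gaussianPDF 0 v y)
      (show Measurable fun u : ℝ => gaussianPDF 0 v (u + y) from
        (measurable_gaussianPDF 0 v).comp (measurable_id.add_const y))]
    simp only [mul_comm (gaussianPDF 0 v y)]
  simp only [Pi.mul_apply, hswap1]
  rw [lintegral_lintegral_swap (((measurable_gaussianPDF 0 v).comp
    (measurable_snd.add measurable_fst)).mul
    ((measurable_gaussianPDF 0 v).comp measurable_fst)).aemeasurable]
  simp only [gaussianPDF_conv v hv]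
  rw [gaussianReal_apply 0 h2v]

lemma map_sub_gauss {Ω : Type*} [MeasurableSpace Ω] (P : Measure Ω) [IsProbabilityMeasure P]
    {v : ℝ≥0} (hv : v ≠ 0) {X Y : Ω → ℝ} (hX : Measurable X) (hY : Measurable Y)
    (hXg : P.map X = gaussianReal 0 v) (hYg : P.map Y = gaussianReal 0 v)
    (hind : IndepFun X Y P) (c : ℝ) :
    P {ω | X ω - Y ω ≤ c} = gaussianReal 0 (2 * v) (Set.Iic c) := by
  have hpair : P.map (fun ω => (X ω, Y ω)) = (gaussianReal 0 v).prod (gaussianReal 0 v) := by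
    have h0 := (indepFun_iff_map_prod_eq_prod_map_map hX.aemeasurable hY.aemeasurable).mp hind
    rw [hXg, hYg] at h0
    exact h0
  have hs : MeasurableSet {p : ℝ × ℝ | p.1 - p.2 ≤ c} :=
    measurableSet_le (measurable_fst.sub measurable_snd) measurable_const
  have h : P {ω | X ω - Y ω ≤ c} = (P.map fun ω => (X ω, Y ω)) {p : ℝ × ℝ | p.1 - p.2 ≤ c} := by
    rw [Measure.map_apply (hX.prodMk hY) hs]
    rfl
  rw [h, hpair, gauss_prod_sub v hv c]

lemma gauss_scale (σ : ℝ) (hσ : 0 < σ) (c : ℝ) :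
    gaussianReal 0 (2 * Real.toNNReal (σ ^ 2)) (Set.Iic c)
      = gaussianReal 0 1 (Set.Iic (c / (Real.sqrt 2 * σ))) := by
  have hk : (0:ℝ) < Real.sqrt 2 * σ := by positivity
  have hmap := gaussianReal_map_const_mul (μ := 0) (v := 1) (Real.sqrt 2 * σ)
  rw [mul_zero] at hmap
  have hvv : gaussianReal 0 (NNReal.mk ((Real.sqrt 2 * σ)^2) (sq_nonneg _) * 1)
      = gaussianReal 0 (2 * Real.toNNReal (σ^2)) := by
    congr 1
    apply NNReal.coe_injective
    push_cast
    rw [Real.coe_toNNReal _ (sq_nonneg σ), mul_pow, Real.sq_sqrt (by norm_num : (0:ℝ) ≤ 2)]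
    ring
  rw [hvv] at hmap
  rw [← hmap, Measure.map_apply (measurable_const_mul _) measurableSet_Iic]
  congr 1
  ext x
  simp only [Set.mem_preimage, Set.mem_Iic]
  exact (le_div_iff₀' hk).symm

lemma Phi_neg (y : ℝ) : Phi (-y) = 1 - Phi y := by
  have hone : gaussianReal 0 (NNReal.mk (((-1:ℝ))^2) (sq_nonneg _) * 1) = gaussianReal 0 1 := by
    congr 1
    apply NNReal.coe_injective
    push_cast
    norm_num
  have hmap : (gaussianReal 0 1).map (fun x : ℝ => (-1 : ℝ) * x) = gaussianReal 0 1 := by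
    have h0 := gaussianReal_map_const_mul (μ := 0) (v := 1) (-1 : ℝ)
    rwa [mul_zero, hone] at h0
  have h1 : gaussianReal 0 1 (Set.Iic (-y)) = gaussianReal 0 1 (Set.Ici y) := by
    conv_lhs => rw [← hmap]
    rw [Measure.map_apply (measurable_const_mul _) measurableSet_Iic]
    congr 1
    ext x
    simp only [Set.mem_preimage, Set.mem_Iic, Set.mem_Ici]
    constructor <;> intro h <;> linarith
  have hsing : gaussianReal 0 1 {y} = 0 :=
    gaussianReal_absolutelyContinuous 0 one_ne_zero (measure_singleton y)
  have hIio : gaussianReal 0 1 (Set.Iic y) = gaussianReal 0 1 (Set.Iio y) := by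
    apply le_antisymm
    · calc gaussianReal 0 1 (Set.Iic y) = gaussianReal 0 1 (Set.Iio y ∪ {y}) := by
            rw [Set.Iio_union_right]
        _ ≤ gaussianReal 0 1 (Set.Iio y) + gaussianReal 0 1 {y} := measure_union_le _ _
        _ = gaussianReal 0 1 (Set.Iio y) := by rw [hsing, add_zero]
    · exact measure_mono Set.Iio_subset_Iic_self
  have hcompl : gaussianReal 0 1 (Set.Ici y) = 1 - gaussianReal 0 1 (Set.Iio y) := by
    rw [← Set.compl_Iio, measure_compl measurableSet_Iio (measure_ne_top _ _), measure_univ]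
  unfold Phi
  rw [h1, hcompl, ← hIio, ENNReal.toReal_sub_of_le prob_le_one ENNReal.one_ne_top]
  simp

end RewardDesignAux

/-- Privatizing `R ∈ ℝᵈ` with independent `N(0, σ²)` noise: the probability that the
`p` largest entries stay (weakly) above all others and the `q` smallest stay (weakly)
below all others is at most
`min{ Φ((min T^p(R) - max T^{-p}(R))/(√2 σ)), Q((max T_q(R) - min T_{-q}(R))/(√2 σ)) }`. -/
theorem reward_design_bound (d p q : ℕ) (hp : 0 < p) (hq : 0 < q) (hpq : p + q ≤ d)
    (σ : ℝ) (hσ : 0 < σ)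
    {Ω : Type*} [MeasureSpace Ω] (P : Measure Ω) [IsProbabilityMeasure P]
    (R : Fin d → ℝ) (z : Fin d → Ω → ℝ)
    (hmeas : ∀ j, Measurable (z j))
    (hgauss : ∀ j, Measure.map (z j) P = gaussianReal 0 (Real.toNNReal (σ ^ 2)))
    (hindep : iIndepFun z P)
    (Rtil : Fin d → Ω → ℝ) (hRtil : ∀ j ω, Rtil j ω = R j + z j ω)
    (Sp Sq : Finset (Fin d)) (hSpcard : Sp.card = p) (hSqcard : Sq.card = q)
    (hSptop : ∀ i ∈ Sp, ∀ j ∉ Sp, R j ≤ R i)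
    (hSqbot : ∀ i ∈ Sq, ∀ j ∉ Sq, R i ≤ R j)
    (hSp : Sp.Nonempty) (hSpc : Spᶜ.Nonempty) (hSq : Sq.Nonempty) (hSqc : Sqᶜ.Nonempty) :
    (P ({ω | ∀ i ∈ Sp, ∀ j ∉ Sp, Rtil j ω ≤ Rtil i ω} ∩
        {ω | ∀ i ∈ Sq, ∀ j ∉ Sq, Rtil i ω ≤ Rtil j ω})).toReal ≤
      min (Phi ((Sp.inf' hSp R - Spᶜ.sup' hSpc R) / (Real.sqrt 2 * σ)))
          (Qsurv ((Sq.sup' hSq R - Sqᶜ.inf' hSqc R) / (Real.sqrt 2 * σ))) := by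
  have hv : Real.toNNReal (σ ^ 2) ≠ 0 := by
    simp only [ne_eq, Real.toNNReal_eq_zero, not_le]
    positivity
  set E := {ω | ∀ i ∈ Sp, ∀ j ∉ Sp, Rtil j ω ≤ Rtil i ω} ∩
      {ω | ∀ i ∈ Sq, ∀ j ∉ Sq, Rtil i ω ≤ Rtil j ω} with hE
  -- generic one-pair bound
  have key : ∀ a b : Fin d, a ≠ b → ∀ c : ℝ,
      P {ω | z a ω - z b ω ≤ c} = gaussianReal 0 1 (Set.Iic (c / (Real.sqrt 2 * σ))) := by
    intro a b hab c
    rw [map_sub_gauss P hv (hmeas a) (hmeas b) (hgauss a) (hgauss b)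
      (hindep.indepFun hab) c, gauss_scale σ hσ c]
  obtain ⟨i, hiSp, hiR⟩ := Finset.exists_mem_eq_inf' hSp R
  obtain ⟨j, hjSp, hjR⟩ := Finset.exists_mem_eq_sup' hSpc R
  obtain ⟨k, hkSq, hkR⟩ := Finset.exists_mem_eq_sup' hSq R
  obtain ⟨l, hlSq, hlR⟩ := Finset.exists_mem_eq_inf' hSqc R
  have hjSp' : j ∉ Sp := Finset.mem_compl.mp hjSp
  have hlSq' : l ∉ Sq := Finset.mem_compl.mp hlSq
  refine le_min ?_ ?_
  · -- p-side
    have hsub : E ⊆ {ω | z j ω - z i ω ≤ R i - R j} := by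
      intro ω hω
      have := hω.1 i hiSp j hjSp'
      simp only [hRtil] at this
      simp only [Set.mem_setOf_eq]
      linarith
    have hle : P E ≤ gaussianReal 0 1 (Set.Iic ((R i - R j) / (Real.sqrt 2 * σ))) := by
      rw [← key j i (fun h => hjSp' (h ▸ hiSp)) (R i - R j)]
      exact measure_mono hsub
    rw [hiR, hjR]
    exact ENNReal.toReal_mono (measure_ne_top _ _) hle
  · -- q-side
    have hsub : E ⊆ {ω | z k ω - z l ω ≤ R l - R k} := by
      intro ω hω
      have := hω.2 k hkSq l hlSq'
      simp only [hRtil] at this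
      simp only [Set.mem_setOf_eq]
      linarith
    have hle : P E ≤ gaussianReal 0 1 (Set.Iic ((R l - R k) / (Real.sqrt 2 * σ))) := by
      rw [← key k l (fun h => hlSq' (h ▸ hkSq)) (R l - R k)]
      exact measure_mono hsub
    have h2 : (R l - R k) / (Real.sqrt 2 * σ) = -((R k - R l) / (Real.sqrt 2 * σ)) := by
      rw [← neg_div, neg_sub]
    have h3 : (P E).toReal ≤ Phi ((R l - R k) / (Real.sqrt 2 * σ)) :=
      ENNReal.toReal_mono (measure_ne_top _ _) hle
    rw [hkR, hlR]
    rw [h2, Phi_neg] at h3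
    exact h3
end

section
/- Let R̃_j = R_j + z_j for j ∈ [d], where z_j ∼ N(0, σ²/N) are Gaussian random variables. Then E[max_j |R̃_j|] ≤ max_j |R_j| + σ√(2/(Nπ)) + σ√((1 - 2/π)(d-1)/N). -/
open MeasureTheory ProbabilityTheory Real Set
open scoped NNReal ENNReal

lemma sup'_le_mean_add {d : ℕ} (hd : 0 < d) (ne : (Finset.univ : Finset (Fin d)).Nonempty)
    (a : Fin d → ℝ) (c : ℝ) :
    Finset.univ.sup' ne a ≤ (∑ j, a j) / d +
      Real.sqrt (((d : ℝ) - 1) / d) * Real.sqrt (∑ j, (a j - c) ^ 2) := by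
  have hd0 : (0:ℝ) < (d:ℝ) := by exact_mod_cast hd
  set A : ℝ := (∑ j, a j) / d with hA
  have hsum : ∑ j, a j = d * A := by rw [hA]; field_simp
  -- reduce to c = A
  have hmono : ∑ j, (a j - A) ^ 2 ≤ ∑ j, (a j - c) ^ 2 := by
    have key : ∑ j, (a j - c) ^ 2 = (∑ j, (a j - A) ^ 2) + d * (A - c) ^ 2 := by
      have : ∀ j : Fin d, (a j - c) ^ 2 = (a j - A) ^ 2 + (2 * (A - c)) * a j
          + ((A - c) * (- c - A)) := by intro j; ring
      rw [Finset.sum_congr rfl (fun j _ => this j), Finset.sum_add_distrib,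
        Finset.sum_add_distrib, ← Finset.mul_sum, Finset.sum_const, hsum]
      simp [Finset.card_univ]
      ring
    nlinarith [sq_nonneg (A - c)]
  have step : Finset.univ.sup' ne a ≤ A +
      Real.sqrt (((d : ℝ) - 1) / d) * Real.sqrt (∑ j, (a j - A) ^ 2) := by
    obtain ⟨m, -, hm⟩ := Finset.exists_mem_eq_sup' ne a
    rw [hm]
    set S : ℝ := ∑ j, (a j - A) ^ 2 with hS
    set t : ℝ := a m - A with ht
    have hle : ∀ j, a j ≤ a m := fun j => hm ▸ Finset.le_sup' a (Finset.mem_univ j)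
    have htnn : 0 ≤ t := by
      have : ∑ j, a j ≤ ∑ _j : Fin d, a m := Finset.sum_le_sum fun j _ => hle j
      simp [Finset.card_univ] at this
      rw [ht, hA, sub_nonneg, div_le_iff₀ hd0]
      linarith [this]
    have hzero : ∑ j, (a j - A) = 0 := by
      rw [Finset.sum_sub_distrib, hsum]; simp [Finset.card_univ]
    have herase := Finset.sum_erase_eq_sub (f := fun j => a j - A) (Finset.mem_univ m)
    rw [hzero] at herase
    have hts : t = ∑ j ∈ Finset.univ.erase m, (A - a j) := by
      have h2 : ∑ j ∈ Finset.univ.erase m, (A - a j)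
          = -∑ j ∈ Finset.univ.erase m, (a j - A) := by
        rw [← Finset.sum_neg_distrib]
        exact Finset.sum_congr rfl fun j _ => by ring
      rw [h2, herase]; simp [ht]
    have herase2 := Finset.sum_erase_eq_sub (f := fun j => (a j - A) ^ 2) (Finset.mem_univ m)
    have hSsplit : ∑ j ∈ Finset.univ.erase m, (A - a j) ^ 2 = S - t ^ 2 := by
      calc ∑ j ∈ Finset.univ.erase m, (A - a j) ^ 2
          = ∑ j ∈ Finset.univ.erase m, (a j - A) ^ 2 :=
            Finset.sum_congr rfl fun j _ => by ring
        _ = S - t ^ 2 := by rw [herase2]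
    -- Cauchy-Schwarz
    have hcs : t ^ 2 ≤ ((d:ℝ) - 1) * (S - t ^ 2) := by
      have hCS := Finset.sum_mul_sq_le_sq_mul_sq (Finset.univ.erase m)
        (fun j => A - a j) (fun _ => (1:ℝ))
      simp only [mul_one, one_pow, Finset.sum_const, nsmul_eq_mul] at hCS
      have hcard : ((Finset.univ.erase m).card : ℝ) = (d:ℝ) - 1 := by
        rw [Finset.card_erase_of_mem (Finset.mem_univ m), Finset.card_univ, Fintype.card_fin,
          Nat.cast_sub hd]
        simp
      rw [← hts, hSsplit, hcard] at hCS
      linarith [hCS]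
    have hSnn : 0 ≤ S - t ^ 2 := by
      rw [← hSsplit]; positivity
    have htle : t ≤ Real.sqrt (((d:ℝ) - 1) / d) * Real.sqrt S := by
      have hd1 : (1:ℝ) ≤ (d:ℝ) := by exact_mod_cast hd
      have h1 : t = Real.sqrt (t ^ 2) := by
        rw [Real.sqrt_sq htnn]
      rw [h1, ← Real.sqrt_mul (div_nonneg (by linarith) hd0.le) S]
      apply Real.sqrt_le_sqrt
      rw [div_mul_eq_mul_div, le_div_iff₀ hd0]
      nlinarith [hcs]
    linarith [htle]
  refine step.trans ?_
  gcongr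


-- Jensen for sqrt via variance
lemma sqrt_memLp {Ω : Type*} [MeasurableSpace Ω] (P : Measure Ω) [IsProbabilityMeasure P]
    {f : Ω → ℝ} (h0 : ∀ ω, 0 ≤ f ω) (hf : Integrable f P) :
    MemLp (fun ω => Real.sqrt (f ω)) 2 P := by
  have hm : AEStronglyMeasurable (fun ω => Real.sqrt (f ω)) P :=
    Real.continuous_sqrt.comp_aestronglyMeasurable hf.aestronglyMeasurable
  rw [memLp_two_iff_integrable_sq hm]
  have : (fun ω => Real.sqrt (f ω) ^ 2) = f := by
    funext ω; exact Real.sq_sqrt (h0 ω)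
  simpa [this] using hf

lemma integral_sqrt_le {Ω : Type*} [MeasurableSpace Ω] (P : Measure Ω) [IsProbabilityMeasure P]
    {f : Ω → ℝ} (h0 : ∀ ω, 0 ≤ f ω) (hf : Integrable f P) :
    ∫ ω, Real.sqrt (f ω) ∂P ≤ Real.sqrt (∫ ω, f ω ∂P) := by
  have hmem := sqrt_memLp P h0 hf
  have hvar := variance_nonneg (fun ω => Real.sqrt (f ω)) P
  rw [variance_eq_sub hmem] at hvar
  have hsq : P[(fun ω => Real.sqrt (f ω)) ^ 2] = ∫ ω, f ω ∂P := by
    apply integral_congr_ae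
    filter_upwards with ω
    simp [Real.sq_sqrt (h0 ω)]
  rw [hsq] at hvar
  have hnn : 0 ≤ ∫ ω, Real.sqrt (f ω) ∂P :=
    integral_nonneg fun ω => Real.sqrt_nonneg _
  calc ∫ ω, Real.sqrt (f ω) ∂P = Real.sqrt ((∫ ω, Real.sqrt (f ω) ∂P) ^ 2) :=
        (Real.sqrt_sq hnn).symm
    _ ≤ Real.sqrt (∫ ω, f ω ∂P) := Real.sqrt_le_sqrt (by linarith)

-- integrals against the Gaussian pdf
lemma integral_gaussianReal_fun {v : ℝ≥0} (hv : v ≠ 0) (g : ℝ → ℝ) :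
    ∫ x, g x ∂(gaussianReal 0 v) = ∫ x, gaussianPDFReal 0 v x * g x := by
  rw [gaussianReal_of_var_ne_zero 0 hv]
  have hd : (gaussianPDF 0 v) = fun x => ((Real.toNNReal (gaussianPDFReal 0 v x) : ℝ≥0) : ℝ≥0∞) :=
    rfl
  rw [hd, integral_withDensity_eq_integral_smul
    ((measurable_gaussianPDFReal 0 v).real_toNNReal) g]
  refine integral_congr_ae (Filter.Eventually.of_forall fun x => ?_)
  simp [NNReal.smul_def, Real.coe_toNNReal _ (gaussianPDFReal_nonneg 0 v x)]

lemma integrable_gaussianReal_fun {v : ℝ≥0} (hv : v ≠ 0) {g : ℝ → ℝ}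
    (hg : Integrable (fun x => gaussianPDFReal 0 v x * g x) volume) :
    Integrable g (gaussianReal 0 v) := by
  rw [gaussianReal_of_var_ne_zero 0 hv]
  have hd : (gaussianPDF 0 v) = fun x => ((Real.toNNReal (gaussianPDFReal 0 v x) : ℝ≥0) : ℝ≥0∞) :=
    rfl
  rw [hd, integrable_withDensity_iff_integrable_smul
    ((measurable_gaussianPDFReal 0 v).real_toNNReal)]
  apply hg.congr
  filter_upwards with x
  simp [NNReal.smul_def, Real.coe_toNNReal _ (gaussianPDFReal_nonneg 0 v x)]

lemma pdf_eq {v : ℝ≥0} (hv : 0 < (v:ℝ)) (x : ℝ) :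
    gaussianPDFReal 0 v x = (Real.sqrt (2 * π * v))⁻¹ * Real.exp (-((2*(v:ℝ))⁻¹) * x ^ 2) := by
  rw [gaussianPDFReal]
  congr 1
  · congr 1
    field_simp
    ring


lemma K_Ioi (b : ℝ) (hb : 0 < b) (q : ℝ) (hq : (-1:ℝ) < q) :
    ∫ x in Ioi (0:ℝ), x ^ q * Real.exp (-b * x ^ 2) =
      b ^ (-(q + 1) / 2) * (1 / 2) * Real.Gamma ((q + 1) / 2) := by
  rw [← integral_rpow_mul_exp_neg_mul_rpow (by norm_num : (0:ℝ) < 2) hq hb]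
  refine setIntegral_congr_fun measurableSet_Ioi fun x hx => ?_
  rw [← Real.rpow_natCast x 2]
  norm_num

lemma K1 (b : ℝ) (hb : 0 < b) :
    ∫ x : ℝ, |x| * Real.exp (-b * x ^ 2) = b⁻¹ := by
  have h := integral_comp_abs (f := fun y => y * Real.exp (-b * y ^ 2))
  have hL : (∫ x : ℝ, |x| * Real.exp (-b * x ^ 2)) =
      ∫ x : ℝ, |x| * Real.exp (-b * |x| ^ 2) := by
    congr 1; funext x; rw [sq_abs]
  rw [hL, h]
  have h2 : (∫ x in Ioi (0:ℝ), x * Real.exp (-b * x ^ 2)) =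
      ∫ x in Ioi (0:ℝ), x ^ (1:ℝ) * Real.exp (-b * x ^ 2) := by
    refine setIntegral_congr_fun measurableSet_Ioi fun x hx => ?_
    rw [Real.rpow_one]
  rw [h2, K_Ioi b hb 1 (by norm_num)]
  norm_num [Real.Gamma_one, Real.rpow_neg_one]
  ring

lemma K2 (b : ℝ) (hb : 0 < b) :
    ∫ x : ℝ, x ^ 2 * Real.exp (-b * x ^ 2) = b ^ (-(3:ℝ)/2) * (Real.sqrt π / 2) := by
  have h := integral_comp_abs (f := fun y => y ^ 2 * Real.exp (-b * y ^ 2))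
  have hL : (∫ x : ℝ, x ^ 2 * Real.exp (-b * x ^ 2)) =
      ∫ x : ℝ, |x| ^ 2 * Real.exp (-b * |x| ^ 2) := by
    congr 1; funext x; rw [sq_abs]
  rw [hL, h]
  have h2 : (∫ x in Ioi (0:ℝ), x ^ 2 * Real.exp (-b * x ^ 2)) =
      ∫ x in Ioi (0:ℝ), x ^ (2:ℝ) * Real.exp (-b * x ^ 2) := by
    refine setIntegral_congr_fun measurableSet_Ioi fun x hx => ?_
    rw [← Real.rpow_natCast x 2]; norm_num
  rw [h2, K_Ioi b hb 2 (by norm_num)]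
  have hG : Real.Gamma ((2 + 1) / 2) = Real.sqrt π / 2 := by
    have : ((2:ℝ) + 1) / 2 = 1/2 + 1 := by norm_num
    rw [this, Real.Gamma_add_one (by norm_num), Real.Gamma_one_half_eq]
    ring
  rw [hG]
  ring_nf







section moments
variable {v : ℝ≥0}

lemma hvne (hv : 0 < (v:ℝ)) : v ≠ 0 := by
  intro h; rw [h] at hv; simp at hv

lemma hb_pos (hv : 0 < (v:ℝ)) : 0 < (2*(v:ℝ))⁻¹ := by positivity

lemma pdf_abs_integrable (hv : 0 < (v:ℝ)) : Integrable (fun x => gaussianPDFReal 0 v x * |x|) volume := by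
  set b : ℝ := (2*(v:ℝ))⁻¹ with hbdef
  have hb := hb_pos hv
  have h1 : Integrable (fun x : ℝ => |x * Real.exp (-b * x ^ 2)|) volume :=
    (integrable_mul_exp_neg_mul_sq hb).abs
  have h2 : Integrable (fun x : ℝ => (Real.sqrt (2 * π * v))⁻¹ *
      |x * Real.exp (-b * x ^ 2)|) volume := h1.const_mul _
  apply h2.congr
  filter_upwards with x
  rw [pdf_eq hv x, abs_mul, abs_of_pos (Real.exp_pos _)]
  ring

lemma pdf_sq_integrable (hv : 0 < (v:ℝ)) : Integrable (fun x => gaussianPDFReal 0 v x * x ^ 2) volume := by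
  set b : ℝ := (2*(v:ℝ))⁻¹ with hbdef
  have hb := hb_pos hv
  have h1 : Integrable (fun x : ℝ => x ^ (2:ℝ) * Real.exp (-b * x ^ 2)) volume :=
    integrable_rpow_mul_exp_neg_mul_sq hb (by norm_num)
  have h2 := (h1.const_mul ((Real.sqrt (2 * π * v))⁻¹))
  apply h2.congr
  filter_upwards with x
  rw [pdf_eq hv x, show x ^ (2:ℝ) = x ^ (2:ℕ) by rw [← Real.rpow_natCast x 2]; norm_num]
  ring

lemma gaussianReal_abs_integrable (hv : 0 < (v:ℝ)) : Integrable (fun x : ℝ => |x|) (gaussianReal 0 v) :=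
  integrable_gaussianReal_fun (hvne hv) (pdf_abs_integrable hv)

lemma gaussianReal_sq_integrable (hv : 0 < (v:ℝ)) : Integrable (fun x : ℝ => x ^ 2) (gaussianReal 0 v) :=
  integrable_gaussianReal_fun (hvne hv) (pdf_sq_integrable hv)

lemma gaussianReal_abs_integral (hv : 0 < (v:ℝ)) :
    ∫ x, |x| ∂(gaussianReal 0 v) = Real.sqrt (2 * v / π) := by
  rw [integral_gaussianReal_fun (hvne hv)]
  set b : ℝ := (2*(v:ℝ))⁻¹ with hbdef
  have hb := hb_pos hv
  have h1 : (∫ x, gaussianPDFReal 0 v x * |x|) =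
      ∫ x, (Real.sqrt (2 * π * v))⁻¹ * (|x| * Real.exp (-b * x ^ 2)) := by
    congr 1; funext x; rw [pdf_eq hv x]; ring
  rw [h1, integral_const_mul, K1 b hb, hbdef, inv_inv]
  have hsq : ((Real.sqrt (2 * π * (v:ℝ)))⁻¹ * (2*(v:ℝ))) ^ 2 = 2 * (v:ℝ) / π := by
    rw [mul_pow, inv_pow, Real.sq_sqrt (by positivity)]
    field_simp
  rw [← hsq, Real.sqrt_sq (by positivity)]

lemma gaussianReal_sq_integral (hv : 0 < (v:ℝ)) :
    ∫ x, x ^ 2 ∂(gaussianReal 0 v) = (v:ℝ) := by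
  rw [integral_gaussianReal_fun (hvne hv)]
  set b : ℝ := (2*(v:ℝ))⁻¹ with hbdef
  have hb := hb_pos hv
  have h1 : (∫ x, gaussianPDFReal 0 v x * x ^ 2) =
      ∫ x, (Real.sqrt (2 * π * v))⁻¹ * (x ^ 2 * Real.exp (-b * x ^ 2)) := by
    congr 1; funext x; rw [pdf_eq hv x]; ring
  rw [h1, integral_const_mul, K2 b hb]
  have hbv : b ^ (-(3:ℝ)/2) = (2*(v:ℝ)) * Real.sqrt (2*(v:ℝ)) := by
    rw [hbdef, Real.inv_rpow (by positivity), ← Real.rpow_neg (by positivity)]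
    norm_num
    rw [show ((3:ℝ)/2) = 1 + 1/2 by norm_num, Real.rpow_add (by positivity), Real.rpow_one,
      ← Real.sqrt_eq_rpow, Real.sqrt_mul (by norm_num : (0:ℝ) ≤ 2)]
  rw [hbv]
  have hsplit : Real.sqrt (2 * π * (v:ℝ)) = Real.sqrt (2*(v:ℝ)) * Real.sqrt π := by
    rw [show 2*π*(v:ℝ) = (2*(v:ℝ))*π by ring, Real.sqrt_mul (by positivity)]
  rw [hsplit]
  have h2v : 0 < Real.sqrt (2*(v:ℝ)) := Real.sqrt_pos.mpr (by positivity)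
  have hπ : 0 < Real.sqrt π := Real.sqrt_pos.mpr pi_pos
  field_simp

end moments


/-- If `R̃_j = R_j + z_j` with each `z_j ∼ N(0, σ²/N)`, then
`E[max_j |R̃_j|] ≤ max_j |R_j| + σ√(2/(Nπ)) + σ√((1 - 2/π)(d-1)/N)`. -/
theorem expected_max_abs_perturbed (d N : ℕ) (hd : 0 < d) (hN : 1 ≤ N)
    (σ : ℝ) (hσ : 0 < σ)
    {Ω : Type*} [MeasureSpace Ω] (P : Measure Ω) [IsProbabilityMeasure P]
    (R : Fin d → ℝ) (z : Fin d → Ω → ℝ)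
    (hmeas : ∀ j, Measurable (z j))
    (hgauss : ∀ j, Measure.map (z j) P = gaussianReal 0 (Real.toNNReal (σ ^ 2 / N)))
    (Rtil : Fin d → Ω → ℝ) (hRtil : ∀ j ω, Rtil j ω = R j + z j ω)
    (hmaxint : Integrable (fun ω =>
      Finset.univ.sup' (Finset.univ_nonempty_iff.mpr ⟨⟨0, hd⟩⟩)
        (fun j => |Rtil j ω|)) P) :
    (∫ ω, Finset.univ.sup' (Finset.univ_nonempty_iff.mpr ⟨⟨0, hd⟩⟩)
        (fun j => |Rtil j ω|) ∂P) ≤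
      Finset.univ.sup' (Finset.univ_nonempty_iff.mpr ⟨⟨0, hd⟩⟩) (fun j => |R j|) +
      σ * Real.sqrt (2 / (N * Real.pi)) +
      σ * Real.sqrt ((1 - 2 / Real.pi) * (d - 1) / N) := by
  have ne : (Finset.univ : Finset (Fin d)).Nonempty := Finset.univ_nonempty_iff.mpr ⟨⟨0, hd⟩⟩
  have hN0 : (0:ℝ) < N := by exact_mod_cast hN
  have hd0 : (0:ℝ) < d := by exact_mod_cast hd
  have hd1 : (1:ℝ) ≤ (d:ℝ) := by exact_mod_cast hd
  set v : ℝ≥0 := Real.toNNReal (σ ^ 2 / N) with hvdef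
  have hvr : (v:ℝ) = σ ^ 2 / N := Real.coe_toNNReal _ (by positivity)
  have hvpos : 0 < (v:ℝ) := by rw [hvr]; positivity
  set μ0 : ℝ := Real.sqrt (2 * (v:ℝ) / π) with hμ0def
  have hμ0nn : 0 ≤ μ0 := Real.sqrt_nonneg _
  set supR : ℝ := Finset.univ.sup' ne (fun j => |R j|) with hsupR
  -- transfer of moments
  have habs_int : ∀ j, Integrable (fun ω => |z j ω|) P := by
    intro j
    have h := gaussianReal_abs_integrable hvpos
    rw [← hgauss j] at h
    have hsm : AEStronglyMeasurable (fun x : ℝ => |x|) (Measure.map (z j) P) :=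
      measurable_abs.aestronglyMeasurable
    have := (integrable_map_measure hsm (hmeas j).aemeasurable).mp h
    exact this
  have hsq_int : ∀ j, Integrable (fun ω => (z j ω) ^ 2) P := by
    intro j
    have h := gaussianReal_sq_integrable hvpos
    rw [← hgauss j] at h
    have hsm : AEStronglyMeasurable (fun x : ℝ => x ^ 2) (Measure.map (z j) P) :=
      (measurable_id.pow_const 2).aestronglyMeasurable
    have := (integrable_map_measure hsm (hmeas j).aemeasurable).mp h
    exact this
  have habs : ∀ j, ∫ ω, |z j ω| ∂P = μ0 := by
    intro j
    have hsm : AEStronglyMeasurable (fun x : ℝ => |x|) (Measure.map (z j) P) :=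
      measurable_abs.aestronglyMeasurable
    have h := integral_map (hmeas j).aemeasurable hsm
    rw [hgauss j, gaussianReal_abs_integral hvpos] at h
    exact h.symm
  have hsq : ∀ j, ∫ ω, (z j ω) ^ 2 ∂P = (v:ℝ) := by
    intro j
    have hsm : AEStronglyMeasurable (fun x : ℝ => x ^ 2) (Measure.map (z j) P) :=
      (measurable_id.pow_const 2).aestronglyMeasurable
    have h := integral_map (hmeas j).aemeasurable hsm
    rw [hgauss j, gaussianReal_sq_integral hvpos] at h
    exact h.symm
  -- the quadratic deviation
  set W : Ω → ℝ := fun ω => ∑ j, (|z j ω| - μ0) ^ 2 with hWdef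
  have hterm_int : ∀ j, Integrable (fun ω => (|z j ω| - μ0) ^ 2) P := by
    intro j
    have h : Integrable (fun ω => (z j ω) ^ 2 - (2 * μ0) * |z j ω| + μ0 ^ 2) P :=
      ((hsq_int j).sub ((habs_int j).const_mul (2 * μ0))).add (integrable_const _)
    apply h.congr
    filter_upwards with ω
    rw [← sq_abs (z j ω)]
    ring
  have hW_int : Integrable W P := by
    apply integrable_finset_sum
    intro j _
    exact hterm_int j
  have hW0 : ∀ ω, 0 ≤ W ω := fun ω => Finset.sum_nonneg fun j _ => sq_nonneg _
  have hterm_val : ∀ j, ∫ ω, (|z j ω| - μ0) ^ 2 ∂P = (v:ℝ) - μ0 ^ 2 := by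
    intro j
    have heq : ∫ ω, (|z j ω| - μ0) ^ 2 ∂P
        = ∫ ω, ((z j ω) ^ 2 - (2 * μ0) * |z j ω| + μ0 ^ 2) ∂P := by
      apply integral_congr_ae
      filter_upwards with ω
      rw [← sq_abs (z j ω)]
      ring
    have i2 : Integrable (fun ω => (2 * μ0) * |z j ω|) P := (habs_int j).const_mul (2 * μ0)
    have i1 : Integrable (fun ω => (z j ω) ^ 2 - (2 * μ0) * |z j ω|) P := (hsq_int j).sub i2
    rw [heq, integral_add i1 (integrable_const _), integral_sub (hsq_int j) i2,
      integral_const_mul, hsq j, habs j, integral_const]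
    simp [measure_univ]
    ring
  have hW_val : ∫ ω, W ω ∂P = d * ((v:ℝ) - μ0 ^ 2) := by
    rw [hWdef]
    rw [integral_finset_sum _ (fun j _ => hterm_int j)]
    rw [Finset.sum_congr rfl (fun j _ => hterm_val j)]
    simp [Finset.card_univ, mul_comm]
    ring
  -- Y = sqrt W
  set Y : Ω → ℝ := fun ω => Real.sqrt (W ω) with hYdef
  have hY_int : Integrable Y P := (sqrt_memLp P hW0 hW_int).integrable one_le_two
  have hY_le : ∫ ω, Y ω ∂P ≤ Real.sqrt ((d:ℝ) * ((v:ℝ) - μ0 ^ 2)) := by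
    rw [← hW_val]
    exact integral_sqrt_le P hW0 hW_int
  set c : ℝ := Real.sqrt (((d:ℝ) - 1) / d) with hcdef
  have hcnn : 0 ≤ c := Real.sqrt_nonneg _
  -- pointwise bound
  set g : Ω → ℝ := fun ω => supR + ((∑ j, |z j ω|) / d + c * Y ω) with hgdef
  have hg_int : Integrable g P := by
    apply Integrable.add (integrable_const _)
    exact ((integrable_finset_sum _ (fun j _ => habs_int j)).div_const _).add
      (hY_int.const_mul _)
  have h_pt : ∀ ω, Finset.univ.sup' ne (fun j => |Rtil j ω|) ≤ g ω := by
    intro ω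
    have h1 : Finset.univ.sup' ne (fun j => |Rtil j ω|)
        ≤ supR + Finset.univ.sup' ne (fun j => |z j ω|) := by
      apply Finset.sup'_le
      intro j _
      rw [hRtil j ω]
      calc |R j + z j ω| ≤ |R j| + |z j ω| := abs_add_le _ _
        _ ≤ supR + Finset.univ.sup' ne (fun j => |z j ω|) :=
          add_le_add (Finset.le_sup' (fun j => |R j|) (Finset.mem_univ j))
            (Finset.le_sup' (fun j => |z j ω|) (Finset.mem_univ j))
    have h2 := sup'_le_mean_add hd ne (fun j => |z j ω|) μ0
    rw [hgdef]
    simp only []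
    calc Finset.univ.sup' ne (fun j => |Rtil j ω|)
        ≤ supR + Finset.univ.sup' ne (fun j => |z j ω|) := h1
      _ ≤ supR + ((∑ j, |z j ω|) / d + c * Y ω) := by
          apply add_le_add_right
          exact h2
  -- integrate
  have hmain : (∫ ω, Finset.univ.sup' ne (fun j => |Rtil j ω|) ∂P) ≤ ∫ ω, g ω ∂P :=
    integral_mono hmaxint hg_int h_pt
  have hg_val : ∫ ω, g ω ∂P = supR + (μ0 + c * ∫ ω, Y ω ∂P) := by
    have iS : Integrable (fun ω => (∑ j, |z j ω|) / (d:ℝ)) P :=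
      (integrable_finset_sum _ (fun j _ => habs_int j)).div_const _
    have iY : Integrable (fun ω => c * Y ω) P := hY_int.const_mul _
    have iSY : Integrable (fun ω => (∑ j, |z j ω|) / (d:ℝ) + c * Y ω) P := iS.add iY
    have hrw : ∫ ω, g ω ∂P
        = ∫ ω, (supR + ((∑ j, |z j ω|) / (d:ℝ) + c * Y ω)) ∂P := rfl
    rw [hrw, integral_add (integrable_const _) iSY, integral_add iS iY,
      integral_div, integral_finset_sum _ (fun j _ => habs_int j),
      Finset.sum_congr rfl (fun j _ => habs j), integral_const_mul, integral_const]
    simp [Finset.card_univ]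
    field_simp
  -- final algebra
  have hE1 : μ0 = σ * Real.sqrt (2 / (N * π)) := by
    rw [hμ0def, hvr, show 2 * (σ ^ 2 / N) / π = σ ^ 2 * (2 / (N * π)) by
      field_simp, Real.sqrt_mul (sq_nonneg σ), Real.sqrt_sq hσ.le]
  have hμ0sq : μ0 ^ 2 = 2 * (v:ℝ) / π := Real.sq_sqrt (by positivity)
  have hvsub : (v:ℝ) - μ0 ^ 2 = σ ^ 2 / N * (1 - 2 / π) := by
    rw [hμ0sq, hvr]
    field_simp
  have hE2 : c * Real.sqrt ((d:ℝ) * ((v:ℝ) - μ0 ^ 2))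
      = σ * Real.sqrt ((1 - 2 / π) * ((d:ℝ) - 1) / N) := by
    have hsubnn : 0 ≤ (v:ℝ) - μ0 ^ 2 := by
      rw [hvsub]
      have hπ : 2 / π ≤ 1 := by
        rw [div_le_one Real.pi_pos]
        linarith [Real.pi_gt_three]
      exact mul_nonneg (by positivity) (by linarith)
    rw [hcdef, ← Real.sqrt_mul (div_nonneg (by linarith) hd0.le)]
    rw [show ((d:ℝ) - 1) / d * ((d:ℝ) * ((v:ℝ) - μ0 ^ 2))
        = ((d:ℝ) - 1) * ((v:ℝ) - μ0 ^ 2) by field_simp]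
    rw [hvsub, show ((d:ℝ) - 1) * (σ ^ 2 / N * (1 - 2 / π))
        = σ ^ 2 * ((1 - 2 / π) * ((d:ℝ) - 1) / N) by field_simp,
      Real.sqrt_mul (sq_nonneg σ), Real.sqrt_sq hσ.le]
  calc (∫ ω, Finset.univ.sup' ne (fun j => |Rtil j ω|) ∂P)
      ≤ supR + (μ0 + c * ∫ ω, Y ω ∂P) := hg_val ▸ hmain
    _ ≤ supR + (μ0 + c * Real.sqrt ((d:ℝ) * ((v:ℝ) - μ0 ^ 2))) := by
        apply add_le_add_right
        apply add_le_add_right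
        exact mul_le_mul_of_nonneg_left hY_le hcnn
    _ = supR + σ * Real.sqrt (2 / (N * π)) + σ * Real.sqrt ((1 - 2 / π) * ((d:ℝ) - 1) / N) := by
        rw [hE2, hE1]; ring
end

section
/- Let J map the collection of N agents' reward vectors to the joint reward vector R ∈ ℝ^{nm} with entries R_{(k,j)} = (1/N)·Σ_{i∈[N]} r^i(s_k, a^i_{I_j(i)}), where agent i has m_i local actions and m = ∏ m_i. If two inputs differ only in agent j's reward vector and only in one entry of it, with the difference bounded in absolute value by b, then the outputs differ in exactly ∏_{ℓ≠j} m_ℓ entries, each by at most b/N, and consequently the ℓ2-sensitivity of J satisfies Δ₂J ≤ (b/N)·max_{j∈[N]} ∏_{ℓ≠j} m_ℓ. -/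
open scoped Classical

/-- Sensitivity of the joint-reward map `J`: if two reward collections agree except for
agent `j`, whose reward differs in a single (state, local action) entry by at most `b`
(and does differ there), then the joint rewards
`J(r)(s, a) = (1/N) Σᵢ rᵢ(s, a_i)` differ in exactly `∏_{ℓ≠j} m_ℓ` entries, each by at
most `b/N`, and the ℓ2-norm of the difference is at most `(b/N) max_{j'} ∏_{ℓ≠j'} m_ℓ`. -/
theorem joint_reward_sensitivity (N n : ℕ) (hN : 0 < N) (hn : 0 < n)
    (mloc : Fin N → ℕ) (hm : ∀ i, 0 < mloc i) (b : ℝ) (hb : 0 < b)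
    (r r' : ∀ i : Fin N, Fin n → Fin (mloc i) → ℝ)
    (J : (∀ i : Fin N, Fin n → Fin (mloc i) → ℝ) →
      Fin n → (∀ i : Fin N, Fin (mloc i)) → ℝ)
    (hJ : ∀ ρ s a, J ρ s a = (1 / (N : ℝ)) * ∑ i, ρ i s (a i))
    (j : Fin N) (s₀ : Fin n) (a₀ : Fin (mloc j))
    (hagree : ∀ i, i ≠ j → r i = r' i)
    (hentry : ∀ s a, (s, a) ≠ (s₀, a₀) → r j s a = r' j s a)
    (hne : r j s₀ a₀ ≠ r' j s₀ a₀)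
    (hdiff : |r j s₀ a₀ - r' j s₀ a₀| ≤ b) :
    (Finset.univ.filter (fun p : Fin n × (∀ i : Fin N, Fin (mloc i)) =>
        J r p.1 p.2 ≠ J r' p.1 p.2)).card = ∏ ℓ ∈ Finset.univ.erase j, mloc ℓ ∧
    (∀ s a, |J r s a - J r' s a| ≤ b / N) ∧
    Real.sqrt (∑ p : Fin n × (∀ i : Fin N, Fin (mloc i)),
        (J r p.1 p.2 - J r' p.1 p.2) ^ 2) ≤
      (b / N) * ((Finset.univ.sup (fun j' : Fin N =>
        ∏ ℓ ∈ Finset.univ.erase j', mloc ℓ) : ℕ) : ℝ) := by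
  have hNR : (0:ℝ) < N := by exact_mod_cast hN
  set δ : ℝ := r j s₀ a₀ - r' j s₀ a₀ with hδ
  have hδne : δ ≠ 0 := sub_ne_zero.mpr hne
  have key : ∀ s a, J r s a - J r' s a =
      if s = s₀ ∧ a j = a₀ then δ / N else 0 := by
    intro s a
    rw [hJ, hJ, ← mul_sub, ← Finset.sum_sub_distrib]
    have hsum : ∑ i, (r i s (a i) - r' i s (a i)) = r j s (a j) - r' j s (a j) := by
      apply Finset.sum_eq_single j
      · intro i _ hi; rw [hagree i hi]; ring
      · intro h; exact absurd (Finset.mem_univ j) h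
    rw [hsum]
    by_cases hc : s = s₀ ∧ a j = a₀
    · obtain ⟨h1, h2⟩ := hc
      subst h1
      rw [if_pos ⟨rfl, h2⟩, h2, ← hδ]
      field_simp
    · rw [if_neg hc]
      have : (s, a j) ≠ (s₀, a₀) := by
        intro h; exact hc ⟨congrArg Prod.fst h, by
          have := congrArg Prod.snd h; simpa using this⟩
      rw [hentry s (a j) this]; ring
  -- characterize the difference set
  have hfilter : (Finset.univ.filter (fun p : Fin n × (∀ i : Fin N, Fin (mloc i)) =>
        J r p.1 p.2 ≠ J r' p.1 p.2)) =
      Finset.univ.filter (fun p : Fin n × (∀ i : Fin N, Fin (mloc i)) =>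
        p.1 = s₀ ∧ p.2 j = a₀) := by
    apply Finset.filter_congr
    intro p _
    rw [← sub_ne_zero, key p.1 p.2]
    constructor
    · intro h; by_contra hc; rw [if_neg hc] at h; exact h rfl
    · intro h; rw [if_pos h]; exact div_ne_zero hδne (ne_of_gt hNR)
  have hcard : (Finset.univ.filter (fun p : Fin n × (∀ i : Fin N, Fin (mloc i)) =>
        J r p.1 p.2 ≠ J r' p.1 p.2)).card = ∏ ℓ ∈ Finset.univ.erase j, mloc ℓ := by
    rw [hfilter]
    have hprod : Finset.univ.filter (fun p : Fin n × (∀ i : Fin N, Fin (mloc i)) =>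
        p.1 = s₀ ∧ p.2 j = a₀) =
        ({s₀} : Finset (Fin n)) ×ˢ
          (Finset.univ.filter (fun a : ∀ i : Fin N, Fin (mloc i) => a j = a₀)) := by
      ext ⟨s, a⟩
      simp only [Finset.mem_filter, Finset.mem_univ, true_and, Finset.mem_product,
        Finset.mem_singleton]
    have h2 : (Finset.univ.filter (fun a : ∀ i : Fin N, Fin (mloc i) => a j = a₀)).card
        = ∏ ℓ ∈ Finset.univ.erase j, mloc ℓ := by
      rw [← Fintype.piFinset_univ,
        Fintype.card_filter_piFinset_eq_of_mem
          (fun i => (Finset.univ : Finset (Fin (mloc i)))) j (Finset.mem_univ a₀)]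
      simp
    rw [hprod, Finset.card_product, Finset.card_singleton, h2, one_mul]
  have hbound : ∀ s a, |J r s a - J r' s a| ≤ b / N := by
    intro s a
    rw [key s a]
    by_cases hc : s = s₀ ∧ a j = a₀
    · rw [if_pos hc, abs_div, abs_of_pos hNR]
      gcongr
    · rw [if_neg hc, abs_zero]; positivity
  refine ⟨hcard, hbound, ?_⟩
  -- ℓ2 bound
  set C : ℕ := ∏ ℓ ∈ Finset.univ.erase j, mloc ℓ with hC
  have hsum : ∑ p : Fin n × (∀ i : Fin N, Fin (mloc i)),
      (J r p.1 p.2 - J r' p.1 p.2) ^ 2 = (C : ℝ) * (δ / N) ^ 2 := by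
    rw [← hcard, hfilter, ← Finset.sum_filter_add_sum_filter_not Finset.univ
      (fun p : Fin n × (∀ i : Fin N, Fin (mloc i)) => p.1 = s₀ ∧ p.2 j = a₀)]
    have hz : ∑ p ∈ Finset.univ.filter (fun p : Fin n × (∀ i : Fin N, Fin (mloc i)) =>
        ¬(p.1 = s₀ ∧ p.2 j = a₀)), (J r p.1 p.2 - J r' p.1 p.2) ^ 2 = 0 := by
      apply Finset.sum_eq_zero
      intro p hp
      rw [Finset.mem_filter] at hp
      rw [key p.1 p.2, if_neg hp.2]; ring
    rw [hz, add_zero]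
    calc ∑ p ∈ Finset.univ.filter (fun p : Fin n × (∀ i : Fin N, Fin (mloc i)) =>
            p.1 = s₀ ∧ p.2 j = a₀), (J r p.1 p.2 - J r' p.1 p.2) ^ 2
        = ∑ p ∈ Finset.univ.filter (fun p : Fin n × (∀ i : Fin N, Fin (mloc i)) =>
            p.1 = s₀ ∧ p.2 j = a₀), (δ / N) ^ 2 := by
          refine Finset.sum_congr rfl fun p hp => ?_
          rw [Finset.mem_filter] at hp
          rw [key p.1 p.2, if_pos hp.2]
      _ = ((Finset.univ.filter (fun p : Fin n × (∀ i : Fin N, Fin (mloc i)) =>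
            p.1 = s₀ ∧ p.2 j = a₀)).card : ℝ) * (δ / N) ^ 2 := by
          rw [Finset.sum_const, nsmul_eq_mul]
  rw [hsum]
  have hC1 : 1 ≤ C := Nat.one_le_iff_ne_zero.mpr (by
    rw [hC]; exact Finset.prod_ne_zero_iff.mpr fun ℓ _ => (hm ℓ).ne')
  have hsqrt : Real.sqrt ((C : ℝ) * (δ / N) ^ 2) = Real.sqrt C * |δ / N| := by
    rw [Real.sqrt_mul (by positivity), Real.sqrt_sq_eq_abs]
  rw [hsqrt]
  have hC1R : (1:ℝ) ≤ (C:ℝ) := by exact_mod_cast hC1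
  have h1 : Real.sqrt C ≤ (C : ℝ) := by
    have : Real.sqrt C ≤ Real.sqrt ((C:ℝ) ^ 2) := Real.sqrt_le_sqrt (by nlinarith)
    rwa [Real.sqrt_sq (by positivity)] at this
  have h2 : |δ / N| ≤ b / N := by
    rw [abs_div, abs_of_pos hNR]
    gcongr
  have h3 : (C : ℝ) ≤ ((Finset.univ.sup (fun j' : Fin N =>
      ∏ ℓ ∈ Finset.univ.erase j', mloc ℓ) : ℕ) : ℝ) := by
    exact_mod_cast Finset.le_sup (f := fun j' : Fin N =>
      ∏ ℓ ∈ Finset.univ.erase j', mloc ℓ) (Finset.mem_univ j)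
  calc Real.sqrt C * |δ / N| ≤ (C : ℝ) * (b / N) := by
        apply mul_le_mul h1 h2 (abs_nonneg _) (Nat.cast_nonneg C)
    _ ≤ _ * (b / N) := by
        apply mul_le_mul_of_nonneg_right h3 (by positivity)
    _ = _ := by ring
end
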